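/- arXiv:2306.07893 — 4 statements merged into one kernel-verified Lean document; each statement's English description precedes it below -/
import Mathlib

section
/- Consider the TvN game with n ≥ 2 creators under any merit-based monotone mechanism M ∈ M³. Let s be a strategy profile in which exactly k < n creators play e₁, let i be a creator with sᵢ = eⱼ for some j ≠ 1, and let t ≥ 1 be the number of creators playing eⱼ in s. Then uᵢ(e₁, s₋ᵢ) > uᵢ(s): creator i strictly increases her utility by switching her strategy to e₁. -/
/-- A score vector is "sorted" if it is nonincreasing and takes values in `[0,1]`. -/
def SortedScores (n : ℕ) (σ : Fin n → ℝ) : Prop :=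
  (∀ i j : Fin n, i ≤ j → σ j ≤ σ i) ∧ ∀ i, σ i ∈ Set.Icc (0:ℝ) 1

/-- The sorted score vector consisting of `k` ones followed by zeros. -/
def onesVec (n k : ℕ) : Fin n → ℝ := fun i => if (i : ℕ) < k then 1 else 0

/-- A merit-based monotone mechanism (the class `M³`): `M σ i` is the reward of the
creator holding the `i`-th largest score of the nonincreasing score vector `σ`. -/
structure MeritMonotone (n : ℕ) (M : (Fin n → ℝ) → Fin n → ℝ) : Prop where
  reward_mem : ∀ σ, SortedScores n σ → ∀ i, M σ i ∈ Set.Icc (0:ℝ) 1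
  eq_scores : ∀ σ, SortedScores n σ → ∀ i j, σ i = σ j → M σ i = M σ j
  normal_zero : ∀ σ, SortedScores n σ → ∀ i, σ i = 0 → M σ i = 0
  normal_one : ∀ i : Fin n, onesVec n 1 i = 1 → 0 < M (onesVec n 1) i
  fairness : ∀ σ, SortedScores n σ → ∀ i j : Fin n, i ≤ j → M σ j ≤ M σ i
  neg_ext : ∀ σ σ', SortedScores n σ → SortedScores n σ' → ∀ i, σ' i = σ i →
    (∀ j, j ≠ i → σ j ≤ σ' j) → M σ' i ≤ M σ i
  total_mono : ∀ σ σ', SortedScores n σ → SortedScores n σ' → (∀ j, σ j ≤ σ' j) →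
    (∑ i, M σ i) ≤ ∑ i, M σ' i

/-- In the TvN game (strategy `s i : Fin n` = index of the basis vector chosen by
creator `i`), the number of creators playing `e_j`. -/
def cnt {n : ℕ} (s : Fin n → Fin n) (j : Fin n) : ℕ :=
  (Finset.univ.filter fun i => s i = j).card

/-- Creator `i`'s reward at a user of type `e_j`: the score vector there is
`cnt s j` ones followed by zeros; creator `i` has score `1` iff `s i = j`. -/
def rewardAt {n : ℕ} (M : (Fin n → ℝ) → Fin n → ℝ) (s : Fin n → Fin n)
    (i j : Fin n) : ℝ :=
  if s i = j then M (onesVec n (cnt s j)) ⟨0, i.pos⟩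
  else M (onesVec n (cnt s j)) ⟨n - 1, by have := i.pos; omega⟩

/-- Creator `i`'s total utility in the TvN game: `n+1` users of type `e₁`
(index `0`) and one user of type `e_j` for every other `j`. -/
def utility {n : ℕ} (M : (Fin n → ℝ) → Fin n → ℝ) (s : Fin n → Fin n) (i : Fin n) : ℝ :=
  ∑ j : Fin n, (if (j : ℕ) = 0 then (n + 1 : ℝ) else 1) * rewardAt M s i j

/-- Social welfare of the TvN game with attention weights `r` (0-indexed: `r ⟨0⟩` is the
attention to the top-ranked content): at a user of type `e_j`, the `k`-th largest matching
score is `1` exactly when `k < cnt s j`. -/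
def tvnWelfare {n : ℕ} (r : Fin n → ℝ) (s : Fin n → Fin n) : ℝ :=
  ∑ j : Fin n, (if (j : ℕ) = 0 then (n + 1 : ℝ) else 1) *
    ∑ k : Fin n, (if (k : ℕ) < cnt s j then r k else 0)


section Aux

lemma sorted_onesVec (n m : ℕ) : SortedScores n (onesVec n m) := by
  constructor
  · intro i j hij
    have hij' : (i:ℕ) ≤ (j:ℕ) := hij
    simp only [onesVec]
    by_cases hjm : (j:ℕ) < m
    · have him : (i:ℕ) < m := lt_of_le_of_lt hij' hjm
      simp [him, hjm]
    · by_cases him : (i:ℕ) < m <;> simp [him, hjm]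
  · intro i
    simp only [onesVec, Set.mem_Icc]
    split_ifs <;> norm_num

lemma cnt_lt {n : ℕ} (s : Fin n → Fin n) (i j : Fin n) (h : s i ≠ j) : cnt s j < n := by
  have hsub : (Finset.univ.filter fun i' => s i' = j) ⊆ Finset.univ.erase i := by
    intro a ha
    simp only [Finset.mem_filter] at ha
    refine Finset.mem_erase.mpr ⟨?_, Finset.mem_univ a⟩
    rintro rfl; exact h ha.2
  have h1 := Finset.card_le_card hsub
  have hcard : (Finset.univ.erase i).card = n - 1 := by
    rw [Finset.card_erase_of_mem (Finset.mem_univ i)]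
    simp
  have h2 : cnt s j ≤ n - 1 := by rw [← hcard]; exact h1
  have hn := i.pos
  omega

lemma sum_range_ones (n m : ℕ) (h : m ≤ n) (c : ℝ) :
    ∑ i : Fin n, (if (i:ℕ) < m then c else 0) = m * c := by
  rw [Fin.sum_univ_eq_sum_range (fun x => if x < m then c else 0) n]
  rw [← Finset.sum_subset (Finset.range_subset_range.mpr h)
    (by intro x _ hx; simp only [Finset.mem_range] at hx; simp [hx])]
  have hc : ∀ x ∈ Finset.range m, (if x < m then c else 0) = c :=
    fun x hx => by simp [Finset.mem_range.mp hx]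
  rw [Finset.sum_congr rfl hc, Finset.sum_const, nsmul_eq_mul]
  simp

lemma sum_M {n : ℕ} (hn : 0 < n) {M : (Fin n → ℝ) → Fin n → ℝ} (hM : MeritMonotone n M)
    (m : ℕ) (hm1 : 1 ≤ m) (hmn : m ≤ n) :
    ∑ i, M (onesVec n m) i = m * M (onesVec n m) ⟨0, hn⟩ := by
  have hs := sorted_onesVec n m
  rw [← sum_range_ones n m hmn]
  apply Finset.sum_congr rfl
  intro i _
  by_cases h : (i:ℕ) < m
  · simp only [h, if_true]
    exact hM.eq_scores _ hs i ⟨0, hn⟩ (by have h0 : 0 < m := hm1; simp [onesVec, h, h0])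
  · simp only [h, if_false]
    exact hM.normal_zero _ hs i (by simp [onesVec, h])

lemma rewardAt_ne {n : ℕ} {M : (Fin n → ℝ) → Fin n → ℝ} (hM : MeritMonotone n M)
    (s : Fin n → Fin n) (i j : Fin n) (h : s i ≠ j) : rewardAt M s i j = 0 := by
  simp only [rewardAt, h, if_false]
  apply hM.normal_zero _ (sorted_onesVec _ _)
  have hlt := cnt_lt s i j h
  show (if n - 1 < cnt s j then (1:ℝ) else 0) = 0
  rw [if_neg (by omega)]

lemma utility_eq {n : ℕ} {M : (Fin n → ℝ) → Fin n → ℝ} (hM : MeritMonotone n M)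
    (s : Fin n → Fin n) (i : Fin n) :
    utility M s i
      = (if (s i : ℕ) = 0 then (n+1:ℝ) else 1) * M (onesVec n (cnt s (s i))) ⟨0, i.pos⟩ := by
  unfold utility
  rw [Finset.sum_eq_single (s i)]
  · simp [rewardAt]
  · intro b _ hb
    rw [rewardAt_ne hM s i b (Ne.symm hb), mul_zero]
  · intro h; exact absurd (Finset.mem_univ _) h

lemma cnt_update {n : ℕ} (s : Fin n → Fin n) (i v : Fin n) (h : s i ≠ v) :
    cnt (Function.update s i v) v = cnt s v + 1 := by
  unfold cnt
  have hset : (Finset.univ.filter fun i' => Function.update s i v i' = v)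
      = insert i (Finset.univ.filter fun i' => s i' = v) := by
    ext a
    simp only [Finset.mem_filter, Finset.mem_insert, Finset.mem_univ, true_and]
    by_cases ha : a = i
    · subst ha; simp
    · simp [Function.update_of_ne ha, ha]
  rw [hset, Finset.card_insert_of_notMem (by simp [h])]

end Aux

/-- Under any merit-based monotone mechanism in the TvN game, if fewer
than `n` creators play `e₁` and creator `i` plays `e_j` with `j ≠ e₁`, then creator `i`
strictly increases her utility by switching to `e₁`. -/
theorem stmt2 {n : ℕ} (hn : 2 ≤ n) (M : (Fin n → ℝ) → Fin n → ℝ)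
    (hM : MeritMonotone n M)
    (s : Fin n → Fin n) (i j : Fin n) (hj : (j : ℕ) ≠ 0) (hsi : s i = j)
    (k : ℕ) (hk : k = cnt s ⟨0, by omega⟩) (hkn : k < n)
    (t : ℕ) (ht : t = cnt s j) (ht1 : 1 ≤ t) :
    utility M s i < utility M (Function.update s i ⟨0, by omega⟩) i := by
  -- setup
  have hn0 : 0 < n := by omega
  set z0 : Fin n := ⟨0, hn0⟩ with hz0
  have hjz : j ≠ z0 := by
    intro h; apply hj; rw [h]
  have hsiz : s i ≠ z0 := by rw [hsi]; exact hjz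
  set s' := Function.update s i z0 with hs'
  have hs'i : s' i = z0 := Function.update_self i z0 s
  have hcnt' : cnt s' z0 = k + 1 := by
    rw [hs', cnt_update s i z0 hsiz]
    omega
  -- both utilities
  have hu1 : utility M s i = M (onesVec n t) ⟨0, i.pos⟩ := by
    rw [utility_eq hM s i, hsi, if_neg hj, ← ht, one_mul]
  have hu2 : utility M s' i = ((n:ℝ)+1) * M (onesVec n (k+1)) ⟨0, i.pos⟩ := by
    rw [utility_eq hM s' i, hs'i, hcnt']
    norm_num
  rw [hu1, hu2]
  -- key quantities (use i.pos as the positivity proof throughout)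
  set c := M (onesVec n 1) ⟨0, i.pos⟩ with hc
  set x := M (onesVec n (k+1)) ⟨0, i.pos⟩ with hx
  set y := M (onesVec n t) ⟨0, i.pos⟩ with hy
  have hcpos : 0 < c := hM.normal_one ⟨0, i.pos⟩ (by simp [onesVec])
  have hyc : y ≤ c := by
    apply hM.neg_ext (onesVec n 1) (onesVec n t) (sorted_onesVec n 1) (sorted_onesVec n t)
    · show (if (0:ℕ) < t then (1:ℝ) else 0) = (if (0:ℕ) < 1 then (1:ℝ) else 0)
      rw [if_pos (by omega : (0:ℕ) < t), if_pos (by norm_num : (0:ℕ) < 1)]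
    · intro j' hj'
      have hj'0 : (j' : ℕ) ≠ 0 := fun h => hj' (Fin.ext h)
      show (if (j' : ℕ) < 1 then (1:ℝ) else 0) ≤ (if (j' : ℕ) < t then (1:ℝ) else 0)
      rw [if_neg (by omega)]
      split_ifs <;> norm_num
  have hsum : (1:ℝ) * c ≤ ((k:ℝ)+1) * x := by
    have h1 := sum_M i.pos hM 1 le_rfl (by omega)
    have h2 := sum_M i.pos hM (k+1) (by omega) (by omega)
    have h3 := hM.total_mono (onesVec n 1) (onesVec n (k+1)) (sorted_onesVec _ _)
      (sorted_onesVec _ _) ?_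
    · rw [h1, h2] at h3
      push_cast at h3 ⊢
      linarith
    · intro j'
      show (if (j' : ℕ) < 1 then (1:ℝ) else 0) ≤ (if (j' : ℕ) < k+1 then (1:ℝ) else 0)
      by_cases h1 : (j':ℕ) < 1
      · rw [if_pos h1, if_pos (by omega)]
      · rw [if_neg h1]; split_ifs <;> norm_num
  have hxpos : 0 < x := by nlinarith
  have hkr : (k:ℝ) + 1 ≤ n := by exact_mod_cast hkn
  nlinarith
end

section
/- Consider the TvN game with n ≥ 2 creators under any merit-based monotone mechanism M ∈ M³, and let s* = (e₁, …, e₁). Then for every creator i and every j with 2 ≤ j ≤ n, uᵢ(eⱼ, s*₋ᵢ) < uᵢ(s*): every unilateral deviation from s* strictly decreases the deviator's utility, so s* is a strict pure Nash equilibrium. -/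
lemma onesVec_sorted (n k : ℕ) : SortedScores n (onesVec n k) := by
  constructor
  · intro a b hab
    have hab' : (a:ℕ) ≤ b := hab
    simp only [onesVec]
    split_ifs <;> first | omega | norm_num
  · intro i
    simp only [onesVec]
    split_ifs <;> constructor <;> norm_num

lemma M_ones_zero {n : ℕ} {M : (Fin n → ℝ) → Fin n → ℝ} (hM : MeritMonotone n M)
    (k : ℕ) (i : Fin n) (h : k ≤ (i:ℕ)) : M (onesVec n k) i = 0 := by
  apply hM.normal_zero _ (onesVec_sorted n k) i
  simp only [onesVec]
  rw [if_neg (by omega)]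

lemma cnt_const {n : ℕ} (z k : Fin n) : cnt (fun _ => z) k = if k = z then n else 0 := by
  unfold cnt
  split_ifs with h
  · subst h; simp
  · rw [Finset.card_eq_zero, Finset.filter_eq_empty_iff]
    intro a _ hh
    exact h hh.symm

lemma cnt_update_s3 {n : ℕ} (z i j k : Fin n) (hjz : j ≠ z) :
    cnt (Function.update (fun _ => z) i j) k =
      if k = j then 1 else if k = z then n - 1 else 0 := by
  unfold cnt
  split_ifs with h1 h2
  · subst h1
    have : (Finset.univ.filter fun a => Function.update (fun _ => z) i k a = k) = {i} := by
      ext a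
      by_cases ha : a = i <;>
        simp [ha, Function.update, Ne.symm hjz]
    rw [this]; simp
  · subst h2
    have : (Finset.univ.filter fun a => Function.update (fun _ => k) i j a = k)
        = Finset.univ.erase i := by
      ext a
      by_cases ha : a = i <;>
        simp [ha, Function.update, hjz]
    rw [this, Finset.card_erase_of_mem (Finset.mem_univ i)]
    simp
  · rw [Finset.card_eq_zero, Finset.filter_eq_empty_iff]
    intro a _ hh
    by_cases ha : a = i
    · subst ha; rw [Function.update_self] at hh; exact h1 hh.symm
    · rw [Function.update_of_ne ha] at hh; exact h2 hh.symm

/-- Under any merit-based monotone mechanism in the TvN game, every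
unilateral deviation from the all-`e₁` profile strictly decreases the deviator's
utility: the all-`e₁` profile is a strict pure Nash equilibrium. -/
theorem stmt3 {n : ℕ} (hn : 2 ≤ n) (M : (Fin n → ℝ) → Fin n → ℝ)
    (hM : MeritMonotone n M) (i j : Fin n) (hj : (j : ℕ) ≠ 0) :
    utility M (Function.update (fun _ => (⟨0, by omega⟩ : Fin n)) i j) i <
      utility M (fun _ => (⟨0, by omega⟩ : Fin n)) i := by
  have hn0 : 0 < n := by omega
  set z : Fin n := ⟨0, by omega⟩ with hz
  have hjz : j ≠ z := by
    intro h; apply hj; rw [h]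
  set A : ℝ := M (onesVec n 1) ⟨0, hn0⟩ with hA
  set C : ℝ := M (onesVec n n) ⟨0, hn0⟩ with hC
  have hApos : 0 < A := by
    apply hM.normal_one
    simp [onesVec]
  have hsum1 : (∑ k, M (onesVec n 1) k) = A := by
    rw [Finset.sum_eq_single (⟨0, hn0⟩ : Fin n)]
    · intro b _ hb
      apply M_ones_zero hM
      have : (b : ℕ) ≠ 0 := by
        intro h; apply hb; exact Fin.ext h
      omega
    · intro h; exact absurd (Finset.mem_univ _) h
  have hconst : ∀ k : Fin n, M (onesVec n n) k = C := by
    intro k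
    apply hM.eq_scores _ (onesVec_sorted n n)
    simp [onesVec, k.isLt, hn0]
  have hsumn : (∑ k, M (onesVec n n) k) = n * C := by
    rw [Finset.sum_congr rfl (fun k _ => hconst k)]
    simp [Finset.card_univ, mul_comm]
  have hAnC : A ≤ n * C := by
    rw [← hsum1, ← hsumn]
    apply hM.total_mono _ _ (onesVec_sorted n 1) (onesVec_sorted n n)
    intro k
    simp only [onesVec]
    split_ifs <;> first | omega | norm_num
  have hncast : (0:ℝ) < n := by exact_mod_cast hn0
  have hCpos : 0 < C := by nlinarith
  have hu_star : utility M (fun _ => z) i = (n + 1) * C := by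
    unfold utility
    rw [Finset.sum_eq_single z]
    · rw [if_pos rfl]
      unfold rewardAt
      rw [if_pos rfl, cnt_const, if_pos rfl]
    · intro b _ hb
      have hbz : (b : ℕ) ≠ 0 := by
        intro h; exact hb (Fin.ext h)
      rw [if_neg hbz]
      unfold rewardAt
      have hne : (fun _ : Fin n => z) i ≠ b := by
        intro h; exact hb h.symm
      rw [if_neg hne, cnt_const, if_neg hb]
      rw [M_ones_zero hM 0 _ (Nat.zero_le _), mul_zero]
    · intro h; exact absurd (Finset.mem_univ _) h
  have hu_dev : utility M (Function.update (fun _ => z) i j) i = A := by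
    unfold utility
    rw [Finset.sum_eq_single j]
    · rw [if_neg hj]
      unfold rewardAt
      rw [if_pos (by simp), cnt_update_s3 z i j j hjz, if_pos rfl, one_mul]
    · intro b _ hb
      by_cases hbz : b = z
      · subst hbz
        unfold rewardAt
        have hne : Function.update (fun _ : Fin n => z) i j i ≠ z := by
          simp [hjz]
        rw [if_neg hne, cnt_update_s3 z i j z hjz, if_neg (Ne.symm hjz),
          if_pos (rfl : z = z)]
        rw [M_ones_zero hM (n-1) ⟨n-1, by omega⟩ (le_refl _), mul_zero]
      · have hbz0 : (b : ℕ) ≠ 0 := by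
          intro h; exact hbz (Fin.ext h)
        rw [if_neg hbz0]
        unfold rewardAt
        have hne : Function.update (fun _ : Fin n => z) i j i ≠ b := by
          rw [Function.update_self]; exact hb.symm
        rw [if_neg hne, cnt_update_s3 z i j b hjz, if_neg hb, if_neg hbz]
        rw [M_ones_zero hM 0 _ (Nat.zero_le _), mul_zero]
    · intro h; exact absurd (Finset.mem_univ _) h
  rw [hu_star, hu_dev]
  nlinarith
end

section
/- Fix a Backward Rewarding Mechanism M[f₁,…,fₙ] and a nonincreasing score vector 1 ≥ σ₁ ≥ ⋯ ≥ σₙ ≥ 0. (i) If for some j > i the score σⱼ is increased to σ̃ⱼ with σⱼ ≤ σ̃ⱼ ≤ σ_{j−1} (so the ordering among the others is preserved), then the reward of the i-th ranked creator changes by exactly ∫_{σⱼ}^{σ̃ⱼ} (fⱼ(t) − f_{j−1}(t)) dt ≤ 0. (ii) If σ_{i+1} is increased to σ̃_{i+1} with σᵢ ≤ σ̃_{i+1} ≤ σ_{i−1} (so creator i's rank drops by one position), then creator i's reward changes by exactly ∫_{σ_{i+1}}^{σᵢ} (f_{i+1}(t) − fᵢ(t)) dt ≤ 0. -/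
open MeasureTheory

/-- The defining hypotheses on the family `f₁, …, fₙ` of a Backward Rewarding
Mechanism: each `f k` is integrable on `[0,1]`, nonnegative on `[0,1]`,
pointwise nonincreasing in the index `k`, and `f₁ > 0` on `[0,1]`. -/
def BRMHyp {n : ℕ} (f : Fin n → ℝ → ℝ) : Prop :=
  (∀ k, IntervalIntegrable (f k) volume 0 1) ∧
  (∀ k, ∀ t ∈ Set.Icc (0:ℝ) 1, 0 ≤ f k t) ∧
  (∀ k k' : Fin n, k ≤ k' → ∀ t ∈ Set.Icc (0:ℝ) 1, f k' t ≤ f k t) ∧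
  (∀ k : Fin n, (k : ℕ) = 0 → ∀ t ∈ Set.Icc (0:ℝ) 1, 0 < f k t)

/-- `σ_{k+1}`, with the convention `σ_{n+1} = 0`. -/
def nextVal {n : ℕ} (σ : Fin n → ℝ) (k : Fin n) : ℝ :=
  if h : (k : ℕ) + 1 < n then σ ⟨(k : ℕ) + 1, h⟩ else 0

/-- The BRM reward of the creator at (0-indexed) rank `p` of the nonincreasing score
vector `σ`: `∑_{k ≥ p} ∫_{σ_{k+1}}^{σ_k} f_k(t) dt`. -/
noncomputable def brmRankedN {n : ℕ} (f : Fin n → ℝ → ℝ) (σ : Fin n → ℝ) (p : ℕ) : ℝ :=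
  ∑ k : Fin n, if p ≤ (k : ℕ) then ∫ t in (nextVal σ k)..(σ k), f k t else 0

/-- The BRM reward of the creator holding the `i`-th largest score of the
nonincreasing score vector `σ` (0-indexed). -/
noncomputable def brmRanked {n : ℕ} (f : Fin n → ℝ → ℝ) (σ : Fin n → ℝ) (i : Fin n) : ℝ :=
  brmRankedN f σ (i : ℕ)

/-- The nonincreasing rearrangement of an arbitrary score vector:
`sortDesc σ k` is the `k`-th largest entry of `σ` (0-indexed). -/
noncomputable def sortDesc {n : ℕ} (σ : Fin n → ℝ) : Fin n → ℝ :=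
  fun k => σ (Tuple.sort σ k.rev)

/-- The (0-indexed) rank of creator `i` in the score vector `σ`, ties broken by index. -/
noncomputable def rankCount {n : ℕ} (σ : Fin n → ℝ) (i : Fin n) : ℕ :=
  (Finset.univ.filter fun j => σ i < σ j ∨ (σ i = σ j ∧ j < i)).card

/-- Creator `i`'s BRM reward on an arbitrary score vector `σ ∈ [0,1]ⁿ`. -/
noncomputable def brmRewardAt {n : ℕ} (f : Fin n → ℝ → ℝ) (σ : Fin n → ℝ) (i : Fin n) : ℝ :=
  brmRankedN f (sortDesc σ) (rankCount σ i)

/-- The BRM potential `Φ(σ) = ∑_k ∫₀^{σ_(k)} f_k(t) dt`. -/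
noncomputable def brmPotential {n : ℕ} (f : Fin n → ℝ → ℝ) (σ : Fin n → ℝ) : ℝ :=
  ∑ k : Fin n, ∫ t in (0:ℝ)..(sortDesc σ k), f k t

lemma brm_intg {n : ℕ} {f : Fin n → ℝ → ℝ} (hf : BRMHyp f) (k : Fin n) {a b : ℝ}
    (ha : a ∈ Set.Icc (0:ℝ) 1) (hb : b ∈ Set.Icc (0:ℝ) 1) :
    IntervalIntegrable (f k) volume a b := by
  refine (hf.1 k).mono_set ?_
  refine Set.uIcc_subset_uIcc ?_ ?_ <;> rw [Set.uIcc_of_le zero_le_one]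
  exacts [ha, hb]

lemma nextVal_mem {n : ℕ} {σ : Fin n → ℝ} (hσ : ∀ i, σ i ∈ Set.Icc (0:ℝ) 1) (k : Fin n) :
    nextVal σ k ∈ Set.Icc (0:ℝ) 1 := by
  unfold nextVal
  split
  · exact hσ _
  · exact ⟨le_refl 0, zero_le_one⟩

lemma brm_diff {n : ℕ} (f : Fin n → ℝ → ℝ) (σ σ' : Fin n → ℝ) (p p' : ℕ) (S : Finset (Fin n))
    (h : ∀ k ∉ S,
      (if p' ≤ (k:ℕ) then ∫ t in (nextVal σ' k)..(σ' k), f k t else 0) =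
      (if p ≤ (k:ℕ) then ∫ t in (nextVal σ k)..(σ k), f k t else 0)) :
    brmRankedN f σ' p' - brmRankedN f σ p =
      ∑ k ∈ S, ((if p' ≤ (k:ℕ) then ∫ t in (nextVal σ' k)..(σ' k), f k t else 0) -
        (if p ≤ (k:ℕ) then ∫ t in (nextVal σ k)..(σ k), f k t else 0)) := by
  unfold brmRankedN
  rw [← Finset.sum_sub_distrib]
  refine (Finset.sum_subset (Finset.subset_univ S) ?_).symm
  intro k _ hk
  rw [h k hk, sub_self]

/-- Perturbing a sorted score vector under a BRM.
(i) If `σ_j` (with `j > i`) is increased to `v ∈ [σ_j, σ_{j-1}]`, the reward of the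
`i`-th ranked creator changes by exactly `∫_{σ_j}^{v} (f_j − f_{j−1}) ≤ 0`.
(ii) If `σ_{i+1}` is increased to `v` with `σ_i ≤ v ≤ σ_{i−1}` (creator `i`'s rank drops
by one), creator `i`'s reward changes by exactly `∫_{σ_{i+1}}^{σ_i} (f_{i+1} − f_i) ≤ 0`. -/
theorem stmt7 {n : ℕ} (f : Fin n → ℝ → ℝ) (hf : BRMHyp f)
    (σ : Fin n → ℝ) (hσ : SortedScores n σ) :
    (∀ i j : Fin n, i < j → ∀ v : ℝ, σ j ≤ v →
        v ≤ σ ⟨(j : ℕ) - 1, by have := j.isLt; omega⟩ →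
        brmRanked f (Function.update σ j v) i - brmRanked f σ i =
          (∫ t in (σ j)..v, (f j t - f ⟨(j : ℕ) - 1, by have := j.isLt; omega⟩ t)) ∧
        brmRanked f (Function.update σ j v) i - brmRanked f σ i ≤ 0) ∧
    (∀ i : Fin n, ∀ h1 : (i : ℕ) + 1 < n, ∀ v : ℝ,
        σ i ≤ v → v ≤ 1 →
        (∀ h0 : 0 < (i : ℕ), v ≤ σ ⟨(i : ℕ) - 1, by have := i.isLt; omega⟩) →
        brmRanked f
            (Function.update (Function.update σ i v) ⟨(i : ℕ) + 1, h1⟩ (σ i))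
            ⟨(i : ℕ) + 1, h1⟩
          - brmRanked f σ i =
          (∫ t in (σ ⟨(i : ℕ) + 1, h1⟩)..(σ i), (f ⟨(i : ℕ) + 1, h1⟩ t - f i t)) ∧
        brmRanked f
            (Function.update (Function.update σ i v) ⟨(i : ℕ) + 1, h1⟩ (σ i))
            ⟨(i : ℕ) + 1, h1⟩
          - brmRanked f σ i ≤ 0) := by
  obtain ⟨hmono, hmem⟩ := hσ
  constructor
  · -- Part (i)
    intro i j hij v hv1 hv2
    have hij' : (i:ℕ) < (j:ℕ) := hij
    have hjpos : 1 ≤ (j:ℕ) := by omega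
    set j₀ : Fin n := ⟨(j:ℕ) - 1, by have := j.isLt; omega⟩ with hj₀def
    have hj₀v : (j₀:ℕ) = (j:ℕ) - 1 := rfl
    have hne : j₀ ≠ j := by
      intro h; apply_fun (Fin.val) at h; simp [hj₀v] at h; omega
    set σ' := Function.update σ j v with hσ'def
    have hσ'j : σ' j = v := Function.update_self j v σ
    have hσ'ne : ∀ k : Fin n, k ≠ j → σ' k = σ k := fun k hk =>
      Function.update_of_ne hk v σ
    have hnv : ∀ k : Fin n, k ≠ j₀ → nextVal σ' k = nextVal σ k := by
      intro k hk
      unfold nextVal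
      split
      · next h =>
        refine Function.update_of_ne ?_ v σ
        intro he; apply hk
        apply_fun Fin.val at he
        simp at he
        exact Fin.ext (by simp [hj₀v]; omega)
      · rfl
    have hnvj₀ : nextVal σ' j₀ = v := by
      unfold nextVal
      have hlt : (j₀:ℕ) + 1 < n := by have := j.isLt; simp [hj₀v]; omega
      rw [dif_pos hlt]
      have : (⟨(j₀:ℕ)+1, hlt⟩ : Fin n) = j := Fin.ext (by simp [hj₀v]; omega)
      rw [this, hσ'j]
    have hnvj₀' : nextVal σ j₀ = σ j := by
      unfold nextVal
      have hlt : (j₀:ℕ) + 1 < n := by have := j.isLt; simp [hj₀v]; omega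
      rw [dif_pos hlt]
      congr 1
      exact Fin.ext (by simp [hj₀v]; omega)
    -- memberships
    have hσj : σ j ∈ Set.Icc (0:ℝ) 1 := hmem j
    have hσj₀ : σ j₀ ∈ Set.Icc (0:ℝ) 1 := hmem j₀
    have hvmem : v ∈ Set.Icc (0:ℝ) 1 := ⟨le_trans hσj.1 hv1, le_trans hv2 hσj₀.2⟩
    have hnvmem : nextVal σ j ∈ Set.Icc (0:ℝ) 1 := nextVal_mem hmem j
    have key : brmRanked f σ' i - brmRanked f σ i =
        ∫ t in (σ j)..v, (f j t - f j₀ t) := by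
      unfold brmRanked
      rw [brm_diff f σ σ' (i:ℕ) (i:ℕ) {j₀, j} ?_]
      · rw [Finset.sum_pair hne]
        have hi₀ : (i:ℕ) ≤ (j₀:ℕ) := by simp [hj₀v]; omega
        have hi₁ : (i:ℕ) ≤ (j:ℕ) := le_of_lt hij'
        rw [if_pos hi₀, if_pos hi₀, if_pos hi₁, if_pos hi₁]
        rw [hnvj₀, hnvj₀', hσ'ne j₀ hne, hnv j (by exact fun h => hne h.symm), hσ'j]
        have I1 : (∫ t in (σ j)..v, f j₀ t) + (∫ t in v..(σ j₀), f j₀ t) =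
            ∫ t in (σ j)..(σ j₀), f j₀ t :=
          intervalIntegral.integral_add_adjacent_intervals
            (brm_intg hf j₀ hσj hvmem) (brm_intg hf j₀ hvmem hσj₀)
        have I2 : (∫ t in (nextVal σ j)..(σ j), f j t) + (∫ t in (σ j)..v, f j t) =
            ∫ t in (nextVal σ j)..v, f j t :=
          intervalIntegral.integral_add_adjacent_intervals
            (brm_intg hf j hnvmem hσj) (brm_intg hf j hσj hvmem)
        rw [intervalIntegral.integral_sub (brm_intg hf j hσj hvmem)
          (brm_intg hf j₀ hσj hvmem)]
        linarith
      · intro k hk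
        simp only [Finset.mem_insert, Finset.mem_singleton, not_or] at hk
        rw [hnv k hk.1, hσ'ne k hk.2]
    have hle : (∫ t in (σ j)..v, (f j t - f j₀ t)) ≤ 0 := by
      rw [intervalIntegral.integral_sub (brm_intg hf j hσj hvmem)
        (brm_intg hf j₀ hσj hvmem)]
      rw [sub_nonpos]
      refine intervalIntegral.integral_mono_on hv1 (brm_intg hf j hσj hvmem)
        (brm_intg hf j₀ hσj hvmem) ?_
      intro t ht
      refine hf.2.2.1 j₀ j ?_ t ⟨le_trans hσj.1 ht.1, le_trans ht.2 hvmem.2⟩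
      show (j₀:ℕ) ≤ (j:ℕ)
      omega
    exact ⟨key, key ▸ hle⟩
  · -- Part (ii)
    intro i h1 v hvi hv1 hvprev
    set i1 : Fin n := ⟨(i:ℕ) + 1, h1⟩ with hi1def
    have hi1v : (i1:ℕ) = (i:ℕ) + 1 := rfl
    have hne : i ≠ i1 := by
      intro h; apply_fun Fin.val at h; simp [hi1v] at h
    set σ'' := Function.update (Function.update σ i v) i1 (σ i) with hσ''def
    have hσ''i1 : σ'' i1 = σ i := Function.update_self i1 (σ i) (Function.update σ i v)
    have hσ''i : σ'' i = v := by
      rw [hσ''def, Function.update_of_ne hne, Function.update_self]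
    have hσ''ne : ∀ k : Fin n, k ≠ i → k ≠ i1 → σ'' k = σ k := by
      intro k hk hk1
      rw [hσ''def, Function.update_of_ne hk1, Function.update_of_ne hk]
    have hnv : ∀ k : Fin n, (k:ℕ) + 1 ≠ (i:ℕ) → (k:ℕ) + 1 ≠ (i:ℕ) + 1 →
        nextVal σ'' k = nextVal σ k := by
      intro k hk hk1
      unfold nextVal
      split
      · next h =>
        refine hσ''ne _ ?_ ?_
        · intro he; apply_fun Fin.val at he; simp at he; omega
        · intro he; apply_fun Fin.val at he; simp [hi1v] at he; omega
      · rfl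
    have hnvi : nextVal σ i = σ i1 := by
      unfold nextVal
      rw [dif_pos h1]
    have hnvi1 : nextVal σ'' i1 = nextVal σ i1 := hnv i1 (by omega) (by omega)
    have hσi : σ i ∈ Set.Icc (0:ℝ) 1 := hmem i
    have hσi1 : σ i1 ∈ Set.Icc (0:ℝ) 1 := hmem i1
    have hnvmem : nextVal σ i1 ∈ Set.Icc (0:ℝ) 1 := nextVal_mem hmem i1
    have hle' : σ i1 ≤ σ i := hmono i i1 (by show (i:ℕ) ≤ (i1:ℕ); omega)
    have key : brmRanked f σ'' i1 - brmRanked f σ i =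
        ∫ t in (σ i1)..(σ i), (f i1 t - f i t) := by
      unfold brmRanked
      rw [brm_diff f σ σ'' (i:ℕ) (i1:ℕ) {i, i1} ?_]
      · rw [Finset.sum_pair hne]
        rw [if_neg (by simp [hi1v]), if_pos (le_refl (i:ℕ)),
          if_pos (by simp [hi1v]), if_pos (by simp [hi1v])]
        rw [hnvi, hnvi1, hσ''i1]
        have I1 : (∫ t in (nextVal σ i1)..(σ i1), f i1 t) +
            (∫ t in (σ i1)..(σ i), f i1 t) = ∫ t in (nextVal σ i1)..(σ i), f i1 t :=
          intervalIntegral.integral_add_adjacent_intervals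
            (brm_intg hf i1 hnvmem hσi1) (brm_intg hf i1 hσi1 hσi)
        rw [intervalIntegral.integral_sub (brm_intg hf i1 hσi1 hσi)
          (brm_intg hf i hσi1 hσi)]
        linarith
      · intro k hk
        simp only [Finset.mem_insert, Finset.mem_singleton, not_or] at hk
        obtain ⟨hk1, hk2⟩ := hk
        have hkv1 : (k:ℕ) ≠ (i:ℕ) := fun h => hk1 (Fin.ext h)
        have hkv2 : (k:ℕ) ≠ (i:ℕ) + 1 := fun h => hk2 (Fin.ext h)
        by_cases hc : (i:ℕ) ≤ (k:ℕ)
        · have hc2 : (i:ℕ) + 2 ≤ (k:ℕ) := by omega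
          rw [if_pos (by simp [hi1v]; omega), if_pos hc,
            hnv k (by omega) (by omega), hσ''ne k hk1 hk2]
        · rw [if_neg (by simp [hi1v]; omega), if_neg hc]
    have hle : (∫ t in (σ i1)..(σ i), (f i1 t - f i t)) ≤ 0 := by
      rw [intervalIntegral.integral_sub (brm_intg hf i1 hσi1 hσi)
        (brm_intg hf i hσi1 hσi)]
      rw [sub_nonpos]
      refine intervalIntegral.integral_mono_on hle' (brm_intg hf i1 hσi1 hσi)
        (brm_intg hf i hσi1 hσi) ?_
      intro t ht
      refine hf.2.2.1 i i1 (by show (i:ℕ) ≤ (i1:ℕ); omega) t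
        ⟨le_trans hσi1.1 ht.1, le_trans ht.2 hσi.2⟩
    exact ⟨key, key ▸ hle⟩
end

section
/- Any C³ game with a finite user set played under a Backward Rewarding Mechanism M[f₁,…,fₙ] is an exact potential game, with exact potential P(s) = Σ_{x∈X} Σ_{k=1}^{n} ∫₀^{σ_{(k)}(x)} f_k(t) dt − Σᵢ cᵢ(sᵢ), where σ_{(k)}(x) is the k-th largest matching score at user x under profile s: for every creator i, every profile s, and every deviation s'ᵢ ∈ Sᵢ, uᵢ(s'ᵢ, s₋ᵢ) − uᵢ(s) = P(s'ᵢ, s₋ᵢ) − P(s). -/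
open MeasureTheory

/-- Creator `i`'s utility in a C³ game with finite user set `U` under the mechanism with
per-user rewards `brmRewardAt f`: total reward over all users minus the production cost. -/
noncomputable def c3Utility {n : ℕ} {U : Type*} [Fintype U] (f : Fin n → ℝ → ℝ)
    (S : Fin n → Type*) (score : ∀ i, S i → U → ℝ) (c : ∀ i, S i → ℝ)
    (s : ∀ i, S i) (i : Fin n) : ℝ :=
  (∑ x : U, brmRewardAt f (fun j => score j (s j) x) i) - c i (s i)

/-- The potential `P(s) = ∑_x ∑_k ∫₀^{σ_(k)(x)} f_k(t) dt − ∑_i c_i(s_i)`. -/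
noncomputable def c3Potential {n : ℕ} {U : Type*} [Fintype U] (f : Fin n → ℝ → ℝ)
    (S : Fin n → Type*) (score : ∀ i, S i → U → ℝ) (c : ∀ i, S i → ℝ)
    (s : ∀ i, S i) : ℝ :=
  (∑ x : U, brmPotential f (fun j => score j (s j) x)) - ∑ i, c i (s i)

/-!
For a nonincreasing score vector `τ` on `n` creators, the potential `∑ₖ ∫₀^{τₖ} fₖ` minus the
reward `∑_{k ≥ p} ∫_{τₖ₊₁}^{τₖ} fₖ` of the creator at rank `p` telescopes to
`∑_{k < p} ∫₀^{τₖ} fₖ + ∑_{k > p} ∫₀^{τₖ} fₖ₋₁`, which is the potential, built from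
`f₁, …, fₙ₋₁`, of the sorted scores of the other `n - 1` creators. Hence at every user, a
creator's reward minus the potential does not depend on that creator's own strategy, and
summing over users (and subtracting costs) gives the exact potential property.
-/

open Finset

theorem Fin.map_univ_val_eq_cons_succAbove {m : ℕ} {α : Type*} (g : Fin (m + 1) → α)
    (p : Fin (m + 1)) :
    univ.val.map g = g p ::ₘ univ.val.map (fun k => g (p.succAbove k)) := by
  rw [Fin.univ_succAbove m p, Finset.cons_val, Multiset.map_cons, Finset.map_val,
    Multiset.map_map]
  rfl

theorem Antitone.eq_of_map_univ_val_eq {m : ℕ} {α : Type*} [PartialOrder α] {g h : Fin m → α}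
    (hg : Antitone g) (hh : Antitone h) (hgh : univ.val.map g = univ.val.map h) : g = h := by
  rw [Fin.univ_val_map, Fin.univ_val_map, Multiset.coe_eq_coe] at hgh
  exact List.ofFn_injective (hgh.eq_of_sortedGE hg.sortedGE_ofFn hh.sortedGE_ofFn)

theorem Finset.sum_apply_update_sub {ι M : Type*} [Fintype ι] [DecidableEq ι] [AddCommGroup M]
    {α : ι → Type*} (c : ∀ i, α i → M) (s : ∀ i, α i) (i : ι) (a : α i) :
    ∑ j, c j (Function.update s i a j) - ∑ j, c j (s j) = c i a - c i (s i) := by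
  simp_rw [Function.apply_update c s i a]
  rw [sum_update_of_mem (mem_univ i), sum_eq_add_sum_sdiff_singleton_of_mem (mem_univ i)]
  abel

section Sorting

variable {n : ℕ} (σ : Fin n → ℝ)

theorem antitone_sortDesc : Antitone (sortDesc σ) :=
  fun _ _ hab => Tuple.monotone_sort σ (Fin.rev_le_rev.2 hab)

theorem map_univ_val_sortDesc : univ.val.map (sortDesc σ) = univ.val.map σ := by
  rw [show sortDesc σ = σ ∘ (Fin.revPerm.trans (Tuple.sort σ)) from rfl, ← Multiset.map_map,
    Multiset.map_univ_val_equiv]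

theorem card_filter_sortDesc (p : ℝ → Prop) [DecidablePred p] :
    #{k | p (sortDesc σ k)} = #{j | p (σ j)} := by
  have h := congrArg (Multiset.countP p) (map_univ_val_sortDesc σ)
  rwa [Multiset.countP_map, Multiset.countP_map] at h

theorem card_lt_le_rankCount (i : Fin n) : #{j | σ i < σ j} ≤ rankCount σ i :=
  card_le_card fun j hj => by
    simp only [mem_filter, mem_univ, true_and] at hj ⊢
    exact Or.inl hj

theorem rankCount_lt_card_le (i : Fin n) : rankCount σ i < #{j | σ i ≤ σ j} := by
  refine card_lt_card ((ssubset_iff_of_subset fun j hj => ?_).2 ⟨i, by simp, by simp⟩)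
  simp only [mem_filter, mem_univ, true_and] at hj ⊢
  rcases hj with h | ⟨h, -⟩ <;> exact h.le

theorem rankCount_lt (i : Fin n) : rankCount σ i < n :=
  (rankCount_lt_card_le σ i).trans_le ((card_le_univ _).trans_eq (Fintype.card_fin n))

noncomputable def rankIdx (i : Fin n) : Fin n := ⟨rankCount σ i, rankCount_lt σ i⟩

theorem sortDesc_rankIdx (i : Fin n) : sortDesc σ (rankIdx σ i) = σ i := by
  have hanti := antitone_sortDesc σ
  apply le_antisymm
  · have h := (Tuple.lt_card_gt_iff_apply_gt_of_antitone (j := rankIdx σ i) (a := σ i) hanti).not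
    rw [card_filter_sortDesc σ (σ i < ·), not_lt, not_lt] at h
    exact h.1 (card_lt_le_rankCount σ i)
  · rw [← Tuple.lt_card_ge_iff_apply_ge_of_antitone hanti, card_filter_sortDesc σ (σ i ≤ ·)]
    exact rankCount_lt_card_le σ i

theorem sortDesc_comp_succAbove (σ : Fin (n + 1) → ℝ) (i : Fin (n + 1)) :
    sortDesc (fun k => σ (i.succAbove k)) = fun k => sortDesc σ ((rankIdx σ i).succAbove k) := by
  refine (antitone_sortDesc _).eq_of_map_univ_val_eq
    ((antitone_sortDesc σ).comp_monotone (Fin.strictMono_succAbove _).monotone) ?_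
  have h := map_univ_val_sortDesc σ
  rw [Fin.map_univ_val_eq_cons_succAbove _ (rankIdx σ i), Fin.map_univ_val_eq_cons_succAbove σ i,
    sortDesc_rankIdx, Multiset.cons_inj_right] at h
  rw [map_univ_val_sortDesc, h]

end Sorting

section Telescoping

variable {n : ℕ}

theorem nextVal_mem_Icc {τ : Fin n → ℝ} (hτ : ∀ k, τ k ∈ Set.Icc (0 : ℝ) 1) (k : Fin n) :
    nextVal τ k ∈ Set.Icc (0 : ℝ) 1 := by
  unfold nextVal
  split
  · exact hτ _
  · simp

theorem nextVal_castSucc (τ : Fin (n + 1) → ℝ) (k : Fin n) : nextVal τ k.castSucc = τ k.succ := by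
  simp [nextVal, Fin.succ]

theorem nextVal_last (τ : Fin (n + 1) → ℝ) : nextVal τ (Fin.last n) = 0 := by
  simp [nextVal]

theorem integral_sub_integral_nextVal {f : Fin n → ℝ → ℝ}
    (hf : ∀ k, IntervalIntegrable (f k) volume 0 1) {τ : Fin n → ℝ}
    (hτ : ∀ k, τ k ∈ Set.Icc (0 : ℝ) 1) (k : Fin n) :
    (∫ t in (0 : ℝ)..τ k, f k t) - ∫ t in nextVal τ k..τ k, f k t =
      ∫ t in (0 : ℝ)..nextVal τ k, f k t := by
  have hint : ∀ x ∈ Set.Icc (0 : ℝ) 1, IntervalIntegrable (f k) volume 0 x := fun x hx =>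
    (hf k).mono_set (Set.uIcc_subset_uIcc Set.left_mem_uIcc (Set.Icc_subset_uIcc hx))
  rw [← intervalIntegral.integral_interval_sub_left (hint _ (hτ k))
    (hint _ (nextVal_mem_Icc hτ k))]
  ring

theorem sum_integral_sub_brmRankedN {f : Fin (n + 1) → ℝ → ℝ}
    (hf : ∀ k, IntervalIntegrable (f k) volume 0 1) {τ : Fin (n + 1) → ℝ}
    (hτ : ∀ k, τ k ∈ Set.Icc (0 : ℝ) 1) (p : Fin (n + 1)) :
    (∑ k, ∫ t in (0 : ℝ)..τ k, f k t) - brmRankedN f τ p =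
      ∑ k : Fin n, ∫ t in (0 : ℝ)..τ (p.succAbove k), f k.castSucc t := by
  have hterm : ∀ k, (∫ t in (0 : ℝ)..τ k, f k t) -
      (if (p : ℕ) ≤ k then ∫ t in nextVal τ k..τ k, f k t else 0) =
      if (p : ℕ) ≤ k then ∫ t in (0 : ℝ)..nextVal τ k, f k t
      else ∫ t in (0 : ℝ)..τ k, f k t := by
    intro k
    split_ifs
    · exact integral_sub_integral_nextVal hf hτ k
    · exact sub_zero _
  rw [brmRankedN, ← sum_sub_distrib]
  simp only [hterm]
  rw [Fin.sum_univ_castSucc, if_pos (Fin.le_iff_val_le_val.1 (Fin.le_last p)), nextVal_last,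
    intervalIntegral.integral_same, add_zero]
  refine sum_congr rfl fun k _ => ?_
  split_ifs with h
  · rw [Fin.succAbove_of_le_castSucc _ _ h, nextVal_castSucc]
  · rw [Fin.succAbove_of_castSucc_lt _ _ (not_le.1 h)]

end Telescoping

theorem brmPotential_sub_brmRewardAt {n : ℕ} {f : Fin (n + 1) → ℝ → ℝ}
    (hf : ∀ k, IntervalIntegrable (f k) volume 0 1) {σ : Fin (n + 1) → ℝ}
    (hσ : ∀ j, σ j ∈ Set.Icc (0 : ℝ) 1) (i : Fin (n + 1)) :
    brmPotential f σ - brmRewardAt f σ i =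
      brmPotential (fun k => f k.castSucc) (fun k => σ (i.succAbove k)) := by
  rw [brmPotential, brmRewardAt, show rankCount σ i = (rankIdx σ i : ℕ) from rfl,
    sum_integral_sub_brmRankedN hf (τ := sortDesc σ) (fun k => hσ _), brmPotential,
    sortDesc_comp_succAbove]

theorem brmRewardAt_sub_brmPotential_update {n : ℕ} {f : Fin (n + 1) → ℝ → ℝ}
    (hf : ∀ k, IntervalIntegrable (f k) volume 0 1) {σ : Fin (n + 1) → ℝ}
    (hσ : ∀ j, σ j ∈ Set.Icc (0 : ℝ) 1) (i : Fin (n + 1)) {v : ℝ} (hv : v ∈ Set.Icc (0 : ℝ) 1) :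
    brmRewardAt f (Function.update σ i v) i - brmPotential f (Function.update σ i v) =
      brmRewardAt f σ i - brmPotential f σ := by
  have hσv : ∀ j, Function.update σ i v j ∈ Set.Icc (0 : ℝ) 1 :=
    (Function.forall_update_iff σ (p := fun _ x => x ∈ Set.Icc (0 : ℝ) 1)).2
      ⟨hv, fun j _ => hσ j⟩
  rw [← neg_sub, brmPotential_sub_brmRewardAt hf hσv, ← neg_sub (brmPotential f σ),
    brmPotential_sub_brmRewardAt hf hσ]
  simp only [Function.update_of_ne (Fin.succAbove_ne _ _)]

/-- Any C³ game with a finite user set played under a Backward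
Rewarding Mechanism is an exact potential game with potential `c3Potential`. -/
theorem stmt10 {n : ℕ} {U : Type*} [Fintype U]
    (S : Fin n → Type*) (score : ∀ i, S i → U → ℝ) (c : ∀ i, S i → ℝ)
    (hscore : ∀ i a x, score i a x ∈ Set.Icc (0:ℝ) 1)
    (f : Fin n → ℝ → ℝ) (hf : BRMHyp f)
    (s : ∀ i, S i) (i : Fin n) (s'i : S i) :
    c3Utility f S score c (Function.update s i s'i) i - c3Utility f S score c s i =
      c3Potential f S score c (Function.update s i s'i) - c3Potential f S score c s := by
  rcases n with _ | m
  · exact i.elim0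
  have hupdate : ∀ x, (fun j => score j (Function.update s i s'i j) x) =
      Function.update (fun j => score j (s j) x) i (score i s'i x) :=
    fun x => funext (Function.apply_update (fun j a => score j a x) s i s'i)
  have hreward : ∀ x, _ := fun x =>
    brmRewardAt_sub_brmPotential_update hf.1 (fun j => hscore j (s j) x) i (hscore i s'i x)
  have hrewards := sum_congr rfl fun x (_ : x ∈ univ) => hreward x
  have hcost := Finset.sum_apply_update_sub c s i s'i
  rw [sum_sub_distrib, sum_sub_distrib] at hrewards
  simp only [c3Utility, c3Potential, Function.update_self, hupdate]
  linarith
end
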